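/- Let K satisfy Assumption A2(i), let k ∈ {0,1}, and define s_n(t/n; b) = (1/(nb)) Σ_{i=1}^n |(t−i)/(nb)|^k K((t−i)/(nb)) for 1 ≤ t ≤ n and s(r; b) = ∫_{(r−1)/b}^{r/b} |z|^k K(z) dz for r ∈ (0,1]. Then there exists a constant C > 0, independent of n and b_n, such that sup_{b ∈ 𝔅_n} sup_{1 ≤ t ≤ n} |s_n(t/n; b) − s(t/n; b)| ≤ C/(n b_n). -/

import Mathlib

open MeasureTheory ProbabilityTheory Filter Finset Set Topology

noncomputable section

/-- A function is piecewise Lipschitz on `(0,1]`: there are finitely many mutually disjoint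
intervals covering `(0,1]` on each of which the function is Lipschitz. -/
def PiecewiseLipschitzOn01 (g : ℝ → ℝ) : Prop :=
  ∃ (q : ℕ) (I : Fin q → Set ℝ) (C : Fin q → NNReal),
    (∀ l, (I l).OrdConnected) ∧ Pairwise (Function.onFun Disjoint I) ∧
      (⋃ l, I l) = Set.Ioc (0 : ℝ) 1 ∧ ∀ l, LipschitzOnWith (C l) g (I l)

/-- Convergence in distribution (weak convergence of the laws of `X n` under `μ` to `ν`). -/
def TendstoInDistribution {Ω E : Type*} [MeasurableSpace Ω] [MeasurableSpace E]
    [TopologicalSpace E] (X : ℕ → Ω → E) (μ : Measure Ω) (ν : Measure E) : Prop :=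
  ∀ f : BoundedContinuousFunction E ℝ,
    Tendsto (fun n => ∫ ω, f (X n ω) ∂μ) atTop (𝓝 (∫ x, f x ∂ν))

/-- `X n = o_p(1)` : convergence to zero in probability. -/
def TendstoZeroInProb {Ω : Type*} [MeasurableSpace Ω] (μ : Measure Ω) (X : ℕ → Ω → ℝ) : Prop :=
  ∀ δ : ℝ, 0 < δ → Tendsto (fun n => (μ {ω | δ ≤ |X n ω|}).toReal) atTop (𝓝 0)

/-- An i.i.d. sequence of real random variables (indexed by `ι`, with reference index `t0`). -/
def IsIIDSeq {Ω : Type*} [MeasurableSpace Ω] (μ : Measure Ω) {ι : Type*}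
    (ε : ι → Ω → ℝ) (t0 : ι) : Prop :=
  (∀ t, Measurable (ε t)) ∧
    iIndepFun (m := fun _ : ι => (inferInstance : MeasurableSpace ℝ)) ε μ ∧
    ∀ t, IdentDistrib (ε t) (ε t0) μ μ

/-- The chi-square law with `m` degrees of freedom, as a Gamma(m/2, 1/2) law. -/
def chiSqMeasure (m : ℕ) : Measure ℝ := gammaMeasure ((m : ℝ) / 2) (1 / 2)

/-- `ν` is a centered Gaussian law on `Fin m → ℝ` with covariance matrix `S`
(characterized through one-dimensional projections). -/
def IsCenteredGaussianWithCov {m : ℕ} (ν : Measure (Fin m → ℝ))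
    (S : Matrix (Fin m) (Fin m) ℝ) : Prop :=
  IsProbabilityMeasure ν ∧ ∀ a : Fin m → ℝ,
    ν.map (fun z => ∑ i, a i * z i) =
      gaussianReal 0 (Real.toNNReal (∑ i, ∑ j, a i * S i j * a j))

/-- The matrix `Σ = (v/4) M`, `M` having diagonal entries `a` and off-diagonal entries 1. -/
def sigmaMat (m : ℕ) (v a : ℝ) : Matrix (Fin m) (Fin m) ℝ :=
  Matrix.of fun i j => (v / 4) * (if i = j then a else 1)

/-- The time-varying volatility `h_t = g(t/n)`. -/
def hvol (g : ℝ → ℝ) (n : ℕ) (t : ℤ) : ℝ := g ((t : ℝ) / (n : ℝ))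

/-- The autoregression residual `u_t(θ)`, with the convention `u_t(θ) = 0` for `t ≤ 0`. -/
def resid {Ω : Type*} (x : ℕ → ℤ → Ω → ℝ) {p : ℕ} (θ : Fin p → ℝ) (n : ℕ) (t : ℤ)
    (ω : Ω) : ℝ :=
  if 1 ≤ t then x n t ω - ∑ i : Fin p, θ i * x n (t - ((i : ℤ) + 1)) ω else 0

/-- The design matrix of the GLS estimator. -/
def glsMat {Ω : Type*} (x : ℕ → ℤ → Ω → ℝ) (g : ℝ → ℝ) (p n : ℕ) (ω : Ω) :
    Matrix (Fin p) (Fin p) ℝ :=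
  Matrix.of fun i j => ∑ t ∈ Finset.Icc (1 : ℤ) (n : ℤ),
    ((hvol g n t) ^ 2)⁻¹ * (x n (t - 1 - (i : ℤ)) ω * x n (t - 1 - (j : ℤ)) ω)

def glsVec {Ω : Type*} (x : ℕ → ℤ → Ω → ℝ) (g : ℝ → ℝ) (p n : ℕ) (ω : Ω) : Fin p → ℝ :=
  fun i => ∑ t ∈ Finset.Icc (1 : ℤ) (n : ℤ),
    ((hvol g n t) ^ 2)⁻¹ * (x n t ω * x n (t - 1 - (i : ℤ)) ω)

/-- The GLS estimator `θ̂`. -/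
def glsEst {Ω : Type*} (x : ℕ → ℤ → Ω → ℝ) (g : ℝ → ℝ) (p n : ℕ) (ω : Ω) : Fin p → ℝ :=
  Matrix.mulVec (glsMat x g p n ω)⁻¹ (glsVec x g p n ω)

/-- The design matrix of the OLS estimator. -/
def olsMat {Ω : Type*} (x : ℕ → ℤ → Ω → ℝ) (p n : ℕ) (ω : Ω) : Matrix (Fin p) (Fin p) ℝ :=
  Matrix.of fun i j => ∑ t ∈ Finset.Icc (1 : ℤ) (n : ℤ),
    x n (t - 1 - (i : ℤ)) ω * x n (t - 1 - (j : ℤ)) ω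

def olsVec {Ω : Type*} (x : ℕ → ℤ → Ω → ℝ) (p n : ℕ) (ω : Ω) : Fin p → ℝ :=
  fun i => ∑ t ∈ Finset.Icc (1 : ℤ) (n : ℤ), x n t ω * x n (t - 1 - (i : ℤ)) ω

/-- The OLS estimator `θ̌`. -/
def olsEst {Ω : Type*} (x : ℕ → ℤ → Ω → ℝ) (p n : ℕ) (ω : Ω) : Fin p → ℝ :=
  Matrix.mulVec (olsMat x p n ω)⁻¹ (olsVec x p n ω)

/-- The normalized score vector `S(θ)` (built with the true volatility `h_t`). -/
def glsScore {Ω : Type*} (x : ℕ → ℤ → Ω → ℝ) (g : ℝ → ℝ) (p m n : ℕ) (θ : Fin p → ℝ)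
    (ω : Ω) : Fin m → ℝ :=
  fun j => (1 / (2 * Real.sqrt (n : ℝ))) * ∑ t ∈ Finset.Icc (1 : ℤ) (n : ℤ),
    ((resid x θ n t ω ^ 2 / hvol g n t ^ 2 - 1) *
      (resid x θ n (t - ((j : ℤ) + 1)) ω ^ 2 / hvol g n t ^ 2))

/-- `n⁻¹ Σ u_t(θ̂)⁴ h_t⁻⁴`, the estimator of `E ε⁴`. -/
def glsE4 {Ω : Type*} (x : ℕ → ℤ → Ω → ℝ) (g : ℝ → ℝ) (p n : ℕ) (ω : Ω) : ℝ :=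
  (n : ℝ)⁻¹ * ∑ t ∈ Finset.Icc (1 : ℤ) (n : ℤ),
    resid x (glsEst x g p n ω) n t ω ^ 4 / hvol g n t ^ 4

def glsE2 {Ω : Type*} (x : ℕ → ℤ → Ω → ℝ) (g : ℝ → ℝ) (p n : ℕ) (ω : Ω) : ℝ :=
  (n : ℝ)⁻¹ * ∑ t ∈ Finset.Icc (1 : ℤ) (n : ℤ),
    resid x (glsEst x g p n ω) n t ω ^ 2 / hvol g n t ^ 2

def glsE8 {Ω : Type*} (x : ℕ → ℤ → Ω → ℝ) (g : ℝ → ℝ) (p n : ℕ) (ω : Ω) : ℝ :=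
  (n : ℝ)⁻¹ * ∑ t ∈ Finset.Icc (1 : ℤ) (n : ℤ),
    resid x (glsEst x g p n ω) n t ω ^ 8 / hvol g n t ^ 8

/-- The estimated weight matrix `Σ̂` of the (infeasible) GLS ARCH-LM statistic. -/
def glsSigma {Ω : Type*} (x : ℕ → ℤ → Ω → ℝ) (g : ℝ → ℝ) (p m n : ℕ) (ω : Ω) :
    Matrix (Fin m) (Fin m) ℝ :=
  sigmaMat m (glsE4 x g p n ω - (glsE2 x g p n ω) ^ 2) (glsE4 x g p n ω)

/-- The (infeasible) GLS ARCH-LM statistic `Q_GLS`. -/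
def QGLS {Ω : Type*} (x : ℕ → ℤ → Ω → ℝ) (g : ℝ → ℝ) (p m n : ℕ) (ω : Ω) : ℝ :=
  dotProduct (glsScore x g p m n (glsEst x g p n ω) ω)
    (Matrix.mulVec (glsSigma x g p m n ω)⁻¹ (glsScore x g p m n (glsEst x g p n ω) ω))

/-- The (infeasible) empirical autocovariance `γ̂(j)` of the squared GLS residuals. -/
def glsGamma {Ω : Type*} (x : ℕ → ℤ → Ω → ℝ) (g : ℝ → ℝ) (p n j : ℕ) (ω : Ω) : ℝ :=
  (n : ℝ)⁻¹ * ∑ t ∈ Finset.Icc ((j : ℤ) + 1) (n : ℤ),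
    (resid x (glsEst x g p n ω) n t ω ^ 2 - hvol g n t ^ 2) *
      (resid x (glsEst x g p n ω) n (t - (j : ℤ)) ω ^ 2 - hvol g n (t - (j : ℤ)) ^ 2)

def glsOmega4 {Ω : Type*} (x : ℕ → ℤ → Ω → ℝ) (g : ℝ → ℝ) (p n : ℕ) (ω : Ω) : ℝ :=
  ((n : ℝ)⁻¹ * ∑ t ∈ Finset.Icc (1 : ℤ) (n : ℤ), resid x (glsEst x g p n ω) n t ω ^ 4) /
    glsE4 x g p n ω

def glsOmega8 {Ω : Type*} (x : ℕ → ℤ → Ω → ℝ) (g : ℝ → ℝ) (p n : ℕ) (ω : Ω) : ℝ :=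
  ((n : ℝ)⁻¹ * ∑ t ∈ Finset.Icc (1 : ℤ) (n : ℤ), resid x (glsEst x g p n ω) n t ω ^ 8) /
    glsE8 x g p n ω

/-- The (infeasible) GLS Ljung–Box type portmanteau statistic `Q*_GLS`. -/
def QstarGLS {Ω : Type*} (x : ℕ → ℤ → Ω → ℝ) (g : ℝ → ℝ) (p m n : ℕ) (ω : Ω) : ℝ :=
  ((n : ℝ) * ((n : ℝ) + 2) * ∑ i ∈ Finset.Icc 1 m,
      (glsGamma x g p n i ω / glsGamma x g p n 0 ω) ^ 2 / ((n : ℝ) - (i : ℝ))) *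
    (glsOmega4 x g p n ω ^ 2 / glsOmega8 x g p n ω)

/-- Kernel weights entries `K_{ti}` (with `K_{tt} = 0`). -/
def kerEntry (K : ℝ → ℝ) (n : ℕ) (b : ℝ) (t i : ℤ) : ℝ :=
  if t = i then 0 else K (((t : ℝ) - (i : ℝ)) / ((n : ℝ) * b))

/-- Kernel weights `w_{ti}`. -/
def kerWeight (K : ℝ → ℝ) (n : ℕ) (b : ℝ) (t i : ℤ) : ℝ :=
  kerEntry K n b t i / ∑ j ∈ Finset.Icc (1 : ℤ) (n : ℤ), kerEntry K n b t j

/-- The kernel estimator `ĥ_t²` of the variance, built from the squared OLS residuals. -/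
def hhatSq {Ω : Type*} (x : ℕ → ℤ → Ω → ℝ) (K : ℝ → ℝ) (p n : ℕ) (b : ℝ) (t : ℤ)
    (ω : Ω) : ℝ :=
  ∑ i ∈ Finset.Icc (1 : ℤ) (n : ℤ), kerWeight K n b t i * resid x (olsEst x p n ω) n i ω ^ 2

/-- The design matrix of the adaptive (ALS) estimator. -/
def alsMat {Ω : Type*} (x : ℕ → ℤ → Ω → ℝ) (K : ℝ → ℝ) (p n : ℕ) (b : ℝ) (ω : Ω) :
    Matrix (Fin p) (Fin p) ℝ :=
  Matrix.of fun i j => ∑ t ∈ Finset.Icc (1 : ℤ) (n : ℤ),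
    (hhatSq x K p n b t ω)⁻¹ * (x n (t - 1 - (i : ℤ)) ω * x n (t - 1 - (j : ℤ)) ω)

def alsVec {Ω : Type*} (x : ℕ → ℤ → Ω → ℝ) (K : ℝ → ℝ) (p n : ℕ) (b : ℝ) (ω : Ω) :
    Fin p → ℝ :=
  fun i => ∑ t ∈ Finset.Icc (1 : ℤ) (n : ℤ),
    (hhatSq x K p n b t ω)⁻¹ * (x n t ω * x n (t - 1 - (i : ℤ)) ω)

/-- The adaptive estimator `θ̃`. -/
def alsEst {Ω : Type*} (x : ℕ → ℤ → Ω → ℝ) (K : ℝ → ℝ) (p n : ℕ) (b : ℝ) (ω : Ω) :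
    Fin p → ℝ :=
  Matrix.mulVec (alsMat x K p n b ω)⁻¹ (alsVec x K p n b ω)

/-- The approximated (adaptive) score vector `S̃(θ̃)`. -/
def alsScore {Ω : Type*} (x : ℕ → ℤ → Ω → ℝ) (K : ℝ → ℝ) (p m n : ℕ) (b : ℝ) (ω : Ω) :
    Fin m → ℝ :=
  fun j => (1 / (2 * Real.sqrt (n : ℝ))) * ∑ t ∈ Finset.Icc (1 : ℤ) (n : ℤ),
    ((resid x (alsEst x K p n b ω) n t ω ^ 2 / hhatSq x K p n b t ω - 1) *
      (resid x (alsEst x K p n b ω) n (t - ((j : ℤ) + 1)) ω ^ 2 / hhatSq x K p n b t ω))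

def alsE4 {Ω : Type*} (x : ℕ → ℤ → Ω → ℝ) (K : ℝ → ℝ) (p n : ℕ) (b : ℝ) (ω : Ω) : ℝ :=
  (n : ℝ)⁻¹ * ∑ t ∈ Finset.Icc (1 : ℤ) (n : ℤ),
    resid x (alsEst x K p n b ω) n t ω ^ 4 / (hhatSq x K p n b t ω) ^ 2

def alsE2 {Ω : Type*} (x : ℕ → ℤ → Ω → ℝ) (K : ℝ → ℝ) (p n : ℕ) (b : ℝ) (ω : Ω) : ℝ :=
  (n : ℝ)⁻¹ * ∑ t ∈ Finset.Icc (1 : ℤ) (n : ℤ),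
    resid x (alsEst x K p n b ω) n t ω ^ 2 / hhatSq x K p n b t ω

def alsE8 {Ω : Type*} (x : ℕ → ℤ → Ω → ℝ) (K : ℝ → ℝ) (p n : ℕ) (b : ℝ) (ω : Ω) : ℝ :=
  (n : ℝ)⁻¹ * ∑ t ∈ Finset.Icc (1 : ℤ) (n : ℤ),
    resid x (alsEst x K p n b ω) n t ω ^ 8 / (hhatSq x K p n b t ω) ^ 4

/-- The estimated weight matrix `Σ̃` of the adaptive ARCH-LM statistic. -/
def alsSigma {Ω : Type*} (x : ℕ → ℤ → Ω → ℝ) (K : ℝ → ℝ) (p m n : ℕ) (b : ℝ) (ω : Ω) :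
    Matrix (Fin m) (Fin m) ℝ :=
  sigmaMat m (alsE4 x K p n b ω - (alsE2 x K p n b ω) ^ 2) (alsE4 x K p n b ω)

/-- The adaptive ARCH-LM statistic `Q_ALS`. -/
def QALS {Ω : Type*} (x : ℕ → ℤ → Ω → ℝ) (K : ℝ → ℝ) (p m n : ℕ) (b : ℝ) (ω : Ω) : ℝ :=
  dotProduct (alsScore x K p m n b ω)
    (Matrix.mulVec (alsSigma x K p m n b ω)⁻¹ (alsScore x K p m n b ω))

/-- The adaptive empirical autocovariance `γ̃(j)` of the squared residuals. -/
def alsGamma {Ω : Type*} (x : ℕ → ℤ → Ω → ℝ) (K : ℝ → ℝ) (p n j : ℕ) (b : ℝ) (ω : Ω) : ℝ :=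
  (n : ℝ)⁻¹ * ∑ t ∈ Finset.Icc ((j : ℤ) + 1) (n : ℤ),
    (resid x (alsEst x K p n b ω) n t ω ^ 2 - hhatSq x K p n b t ω) *
      (resid x (alsEst x K p n b ω) n (t - (j : ℤ)) ω ^ 2 - hhatSq x K p n b (t - (j : ℤ)) ω)

def alsOmega4 {Ω : Type*} (x : ℕ → ℤ → Ω → ℝ) (K : ℝ → ℝ) (p n : ℕ) (b : ℝ) (ω : Ω) : ℝ :=
  ((n : ℝ)⁻¹ * ∑ t ∈ Finset.Icc (1 : ℤ) (n : ℤ), resid x (alsEst x K p n b ω) n t ω ^ 4) /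
    alsE4 x K p n b ω

def alsOmega8 {Ω : Type*} (x : ℕ → ℤ → Ω → ℝ) (K : ℝ → ℝ) (p n : ℕ) (b : ℝ) (ω : Ω) : ℝ :=
  ((n : ℝ)⁻¹ * ∑ t ∈ Finset.Icc (1 : ℤ) (n : ℤ), resid x (alsEst x K p n b ω) n t ω ^ 8) /
    alsE8 x K p n b ω

/-- The adaptive portmanteau statistic `Q*_ALS`. -/
def QstarALS {Ω : Type*} (x : ℕ → ℤ → Ω → ℝ) (K : ℝ → ℝ) (p m n : ℕ) (b : ℝ) (ω : Ω) : ℝ :=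
  ((n : ℝ) * ((n : ℝ) + 2) * ∑ i ∈ Finset.Icc 1 m,
      (alsGamma x K p n i b ω / alsGamma x K p n 0 b ω) ^ 2 / ((n : ℝ) - (i : ℝ))) *
    (alsOmega4 x K p n b ω ^ 2 / alsOmega8 x K p n b ω)

/-- The squared ARCH(1)-type error process started in the infinite past,
`u_t² = Σ_{i≥0} α^i h_{t-i}² ε_{t-i}² ⋯ ε_t²`, with `h_l = c0` for `l ≤ 0`. -/
def usqARCH {Ω : Type*} (g : ℝ → ℝ) (c0 α : ℝ) (ε : ℤ → Ω → ℝ) (n : ℕ) (t : ℤ) (ω : Ω) : ℝ :=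
  ∑' i : ℕ, α ^ i * (if 1 ≤ t - (i : ℤ) then g (((t : ℝ) - (i : ℝ)) / (n : ℝ)) else c0) ^ 2 *
    ∏ k ∈ Finset.range (i + 1), (ε (t - (k : ℤ)) ω) ^ 2

/-- Assumption A2(i) on the kernel `K`. -/
def KernelAssumption (K : ℝ → ℝ) : Prop :=
  Measurable K ∧ (∀ v, 0 ≤ K v) ∧ (∃ CK : ℝ, ∀ v, K v ≤ CK) ∧ (∫ v, K v = 1) ∧
    MonotoneOn K (Set.Iic 0) ∧ AntitoneOn K (Set.Ici 0) ∧
    Integrable (fun v => v ^ 2 * K v) ∧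
    (∃ (S : Finset ℝ) (K' : ℝ → ℝ), (∀ v ∉ S, HasDerivAt K (K' v) v) ∧
      Integrable (fun v => |v * K' v|)) ∧
    (∃ τ : ℝ, 0 < τ ∧
      Integrable (fun s => |s| ^ τ * ‖FourierTransform.fourier (fun v => (K v : ℂ)) s‖))

/-!
Put `f z = |z| ^ k * K z` and `h = 1 / (n b)`. After the substitution `j = n - i` the kernel sum
is the left Riemann sum of `f` with mesh `h` on `[(t - n) h, t h]`, which is exactly the range of
the integral. On each cell the error of a left Riemann sum is at most `h` times the variation of
`f` on the cell, so the total error is at most `h · Var f`. Unimodality of `K` makes `Var f`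
finite: for `k = 0` it is at most `2 K 0`, and for `k = 1` on `[0, ∞)` one writes
`z K z = F z + (z K z - F z)` with `F z = ∫₀^z K` nondecreasing and `z K z - F z` nonincreasing,
each of variation at most `∫ K`. Finally `h ≤ 1 / (c_min n b_n)`.
-/

theorem eVariationOn_neg {α E : Type*} [LinearOrder α] [SeminormedAddCommGroup E] (f : α → E)
    (s : Set α) : eVariationOn (fun x => -f x) s = eVariationOn f s := by
  simp only [eVariationOn, edist_neg_neg]

theorem eVariationOn_add_le {α E : Type*} [LinearOrder α] [SeminormedAddCommGroup E]
    (f g : α → E) (s : Set α) :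
    eVariationOn (fun x => f x + g x) s ≤ eVariationOn f s + eVariationOn g s := by
  refine iSup_le fun ⟨n, u, hu, us⟩ => ?_
  calc ∑ i ∈ Finset.range n, edist (f (u (i + 1)) + g (u (i + 1))) (f (u i) + g (u i))
      ≤ ∑ i ∈ Finset.range n,
          (edist (f (u (i + 1))) (f (u i)) + edist (g (u (i + 1))) (g (u i))) :=
        Finset.sum_le_sum fun i _ => edist_add_add_le _ _ _ _
    _ ≤ eVariationOn f s + eVariationOn g s := by
        rw [Finset.sum_add_distrib]
        exact add_le_add (eVariationOn.sum_le hu us) (eVariationOn.sum_le hu us)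

theorem AntitoneOn.eVariationOn_eq {α : Type*} [LinearOrder α] {f : α → ℝ} {s : Set α}
    {a b : α} (hf : AntitoneOn f s) (as : a ∈ s) (bs : b ∈ s) :
    eVariationOn f (s ∩ Icc a b) = .ofReal (f a - f b) := by
  rw [← eVariationOn_neg, hf.neg.eVariationOn_eq as bs, neg_sub_neg]

theorem abs_mul_sub_integral_le_eVariationOn {f : ℝ → ℝ} {c d : ℝ} (hcd : c ≤ d)
    (hf : IntervalIntegrable f volume c d) (hfv : BoundedVariationOn f (Icc c d)) :
    |(d - c) * f c - ∫ z in c..d, f z| ≤ (d - c) * (eVariationOn f (Icc c d)).toReal := by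
  have hconst : (d - c) * f c - ∫ z in c..d, f z = ∫ z in c..d, (f c - f z) := by
    rw [intervalIntegral.integral_sub intervalIntegrable_const hf,
      intervalIntegral.integral_const, smul_eq_mul]
  have hbound : ∀ z ∈ uIoc c d, ‖f c - f z‖ ≤ (eVariationOn f (Icc c d)).toReal := by
    intro z hz
    rw [uIoc_of_le hcd] at hz
    exact hfv.dist_le ⟨le_rfl, hcd⟩ (Ioc_subset_Icc_self hz)
  rw [hconst, ← Real.norm_eq_abs, mul_comm]
  simpa [abs_of_nonneg (sub_nonneg.2 hcd)] using
    intervalIntegral.norm_integral_le_of_norm_le_const hbound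

theorem abs_riemannSum_sub_integral_le_eVariationOn {f : ℝ → ℝ} (hf : LocallyIntegrable f)
    {a h : ℝ} (hh : 0 ≤ h) (n : ℕ) (hfv : BoundedVariationOn f (Icc a (a + n * h))) :
    |h * ∑ j ∈ Finset.range n, f (a + j * h) - ∫ z in a..a + n * h, f z|
      ≤ h * (eVariationOn f (Icc a (a + n * h))).toReal := by
  induction n with
  | zero => simp
  | succ n ih =>
    set c := a + n * h
    have hc : a + ((n + 1 : ℕ) : ℝ) * h = c + h := by push_cast; ring
    have hac : a ≤ c := le_add_of_nonneg_right (by positivity)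
    have hcc : c ≤ c + h := le_add_of_nonneg_right hh
    rw [hc] at hfv ⊢
    have hv₁ : BoundedVariationOn f (Icc a c) := hfv.mono (Icc_subset_Icc_right hcc)
    have hv₂ : BoundedVariationOn f (Icc c (c + h)) := hfv.mono (Icc_subset_Icc_left hac)
    have hii : ∀ u v, IntervalIntegrable f volume u v := fun u v =>
      (hf.integrableOn_isCompact isCompact_uIcc).intervalIntegrable
    have hcell := abs_mul_sub_integral_le_eVariationOn hcc (hii c (c + h)) hv₂
    rw [add_sub_cancel_left] at hcell
    have hadd := eVariationOn.Icc_add_Icc f hac hcc (mem_univ c)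
    simp only [Set.univ_inter] at hadd
    rw [Finset.sum_range_succ, ← intervalIntegral.integral_add_adjacent_intervals (hii a c)
      (hii c (c + h)), ← hadd, ENNReal.toReal_add hv₁ hv₂]
    calc _ = |(h * ∑ j ∈ Finset.range n, f (a + j * h) - ∫ z in a..c, f z)
          + (h * f c - ∫ z in c..c + h, f z)| := by congr 1; ring
      _ ≤ _ := (abs_add_le _ _).trans (by linarith [ih hv₁])

section UnimodalVariation

variable {G : ℝ → ℝ}

theorem eVariationOn_id_mul_Icc_le_of_antitoneOn (hG0 : ∀ z, 0 ≤ G z)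
    (hG : AntitoneOn G (Ici 0)) {B : ℝ} (hB : 0 ≤ B) :
    eVariationOn (fun z => z * G z) (Icc 0 B) ≤ .ofReal (2 * ∫ z in 0..B, G z) := by
  have hGi : ∀ x y, 0 ≤ x → 0 ≤ y → IntervalIntegrable G volume x y := fun x y hx hy =>
    (hG.mono fun z hz => le_trans (le_min hx hy) hz.1).intervalIntegrable
  set F : ℝ → ℝ := fun z => ∫ w in 0..z, G w
  have hFadd : ∀ x y, 0 ≤ x → 0 ≤ y → F y = F x + ∫ w in x..y, G w := fun x y hx hy =>
    (intervalIntegral.integral_add_adjacent_intervals (hGi 0 x le_rfl hx) (hGi x y hx hy)).symm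
  have hF : MonotoneOn F (Icc 0 B) := fun x hx y hy hxy => by
    rw [hFadd x y hx.1 hy.1]
    exact le_add_of_nonneg_right (intervalIntegral.integral_nonneg hxy fun z _ => hG0 z)
  have hD : AntitoneOn (fun z => z * G z - F z) (Icc 0 B) := fun x hx y hy hxy => by
    have hcell : (y - x) * G y ≤ ∫ w in x..y, G w := by
      simpa [mul_comm] using intervalIntegral.integral_mono_on hxy intervalIntegrable_const
        (hGi x y hx.1 hy.1) fun z hz => hG (hx.1.trans hz.1) hy.1 hz.2
    have hGxy : G y ≤ G x := hG hx.1 hy.1 hxy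
    show y * G y - F y ≤ x * G x - F x
    rw [hFadd x y hx.1 hy.1]
    nlinarith [mul_le_mul_of_nonneg_left hGxy hx.1]
  have h0 : (0 : ℝ) ∈ Icc 0 B := ⟨le_rfl, hB⟩
  have hBB : B ∈ Icc 0 B := ⟨hB, le_rfl⟩
  have hvF := hF.eVariationOn_eq h0 hBB
  have hvD := hD.eVariationOn_eq h0 hBB
  rw [Set.inter_self] at hvF hvD
  have hBG : 0 ≤ B * G B := mul_nonneg hB (hG0 B)
  have hF0 : F 0 = 0 := intervalIntegral.integral_same
  have hFB : 0 ≤ F B := intervalIntegral.integral_nonneg hB fun z _ => hG0 z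
  calc eVariationOn (fun z => z * G z) (Icc 0 B)
      = eVariationOn (fun z => F z + (z * G z - F z)) (Icc 0 B) := by simp
    _ ≤ eVariationOn F (Icc 0 B) + eVariationOn (fun z => z * G z - F z) (Icc 0 B) :=
      eVariationOn_add_le _ _ _
    _ = .ofReal (F B) + .ofReal (F B - B * G B) := by
      rw [hvF, hvD, hF0]; ring_nf
    _ ≤ .ofReal (F B) + .ofReal (F B) := by gcongr; linarith
    _ = .ofReal (2 * ∫ z in 0..B, G z) := by
      rw [← ENNReal.ofReal_add hFB hFB, two_mul]

theorem eVariationOn_abs_pow_mul_Icc_le_of_antitoneOn (hG0 : ∀ z, 0 ≤ G z)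
    (hG : AntitoneOn G (Ici 0)) {k : ℕ} (hk : k ≤ 1) {B : ℝ} (hB : 0 ≤ B) :
    eVariationOn (fun z => |z| ^ k * G z) (Icc 0 B) ≤ .ofReal (G 0 + 2 * ∫ z in 0..B, G z) := by
  have hint : 0 ≤ ∫ z in 0..B, G z := intervalIntegral.integral_nonneg hB fun z _ => hG0 z
  interval_cases k
  · have hv := (hG.mono Icc_subset_Ici_self).eVariationOn_eq (⟨le_rfl, hB⟩ : (0 : ℝ) ∈ Icc 0 B)
      (⟨hB, le_rfl⟩ : B ∈ Icc 0 B)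
    rw [Set.inter_self] at hv
    simp only [pow_zero, one_mul, hv]
    exact ENNReal.ofReal_le_ofReal (by linarith [hG0 B])
  · have hid : EqOn (fun z => |z| ^ 1 * G z) (fun z => z * G z) (Icc 0 B) := fun z hz => by
      simp [abs_of_nonneg hz.1]
    rw [eVariationOn.eq_of_eqOn hid]
    exact (eVariationOn_id_mul_Icc_le_of_antitoneOn hG0 hG hB).trans
      (ENNReal.ofReal_le_ofReal (by linarith [hG0 0]))

end UnimodalVariation

theorem eVariationOn_abs_pow_mul_le_of_unimodal {K : ℝ → ℝ} (hK0 : ∀ z, 0 ≤ K z)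
    (hKmono : MonotoneOn K (Iic 0)) (hKanti : AntitoneOn K (Ici 0)) (hKi : Integrable K)
    {k : ℕ} (hk : k ≤ 1) :
    eVariationOn (fun z => |z| ^ k * K z) univ ≤ .ofReal (2 * (K 0 + 2 * ∫ z, K z)) := by
  set f : ℝ → ℝ := fun z => |z| ^ k * K z
  set V := K 0 + 2 * ∫ z, K z
  have hV : 0 ≤ V := add_nonneg (hK0 0) (mul_nonneg zero_le_two (integral_nonneg hK0))
  have hint : ∀ a b, a ≤ b → ∫ z in a..b, K z ≤ ∫ z, K z := fun a b hab => by
    rw [intervalIntegral.integral_of_le hab]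
    exact setIntegral_le_integral hKi (ae_of_all _ hK0)
  have hright : ∀ B, 0 ≤ B → eVariationOn f (Icc 0 B) ≤ .ofReal V := fun B hB =>
    (eVariationOn_abs_pow_mul_Icc_le_of_antitoneOn hK0 hKanti hk hB).trans
      (ENNReal.ofReal_le_ofReal (by linarith [hint 0 B hB]))
  have hleft : ∀ A, A ≤ 0 → eVariationOn f (Icc A 0) ≤ .ofReal V := fun A hA => by
    have hKneg : AntitoneOn (fun z => K (-z)) (Ici 0) := fun x hx y hy hxy =>
      hKmono (mem_Iic.2 (neg_nonpos.2 hy)) (mem_Iic.2 (neg_nonpos.2 hx)) (neg_le_neg hxy)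
    have hside := eVariationOn_abs_pow_mul_Icc_le_of_antitoneOn (fun z => hK0 (-z)) hKneg hk
      (neg_nonneg.2 hA)
    have hrefl := eVariationOn.comp_eq_of_antitoneOn f Neg.neg (t := Icc 0 (-A))
      fun _ _ _ _ hxy => neg_le_neg hxy
    rw [image_neg_Icc, neg_neg, neg_zero] at hrefl
    have hfneg : f ∘ Neg.neg = fun z => |z| ^ k * K (-z) := by
      funext z
      simp [f, abs_neg]
    rw [intervalIntegral.integral_comp_neg (fun z => K z), neg_neg, neg_zero] at hside
    rw [← hrefl, hfneg]
    exact hside.trans (ENNReal.ofReal_le_ofReal (by linarith [hint A 0 hA]))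
  rw [eVariationOn.eq_biSup_inter_Icc]
  refine iSup₂_le fun ⟨A, B⟩ _ => ?_
  calc eVariationOn f (univ ∩ Icc A B)
      ≤ eVariationOn f (univ ∩ Icc (min A 0) (max B 0)) :=
        eVariationOn.mono f (inter_subset_inter_right _ (Icc_subset_Icc (min_le_left _ _)
          (le_max_left _ _)))
    _ = eVariationOn f (univ ∩ Icc (min A 0) 0) + eVariationOn f (univ ∩ Icc 0 (max B 0)) :=
        (eVariationOn.Icc_add_Icc f (min_le_right _ _) (le_max_right _ _) (mem_univ _)).symm
    _ ≤ .ofReal V + .ofReal V := by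
        simp only [Set.univ_inter]
        exact add_le_add (hleft _ (min_le_right _ _)) (hright _ (le_max_right _ _))
    _ = .ofReal (2 * V) := by rw [← ENNReal.ofReal_add hV hV, two_mul]

theorem sum_Icc_one_comp_div_eq_sum_range (φ : ℝ → ℝ) (n : ℕ) (t c : ℝ) :
    ∑ i ∈ Finset.Icc 1 n, φ ((t - i) / c) =
      ∑ j ∈ Finset.range n, φ ((t - n) / c + j * (1 / c)) := by
  refine Finset.sum_nbij' (fun i => n - i) (fun j => n - j) ?_ ?_ ?_ ?_ ?_ <;> intro i hi <;>
    simp only [Finset.mem_Icc, Finset.mem_range] at hi ⊢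
  any_goals omega
  · rw [Nat.cast_sub hi.2]; congr 1; ring

theorem stmt_12_general (K : ℝ → ℝ) (hK : KernelAssumption K)
    (k : ℕ) (hk : k = 0 ∨ k = 1)
    (bseq : ℕ → ℝ) (hbpos : ∀ n, 0 < bseq n)
    (cmin cmax : ℝ) (hcmin : 0 < cmin) :
    ∃ C : ℝ, 0 < C ∧ ∀ n : ℕ, 1 ≤ n →
      ∀ b ∈ Set.Icc (cmin * bseq n) (cmax * bseq n), ∀ t ∈ Finset.Icc 1 n,
        |(1 / ((n : ℝ) * b)) * ∑ i ∈ Finset.Icc 1 n,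
              |((t : ℝ) - (i : ℝ)) / ((n : ℝ) * b)| ^ k *
                K (((t : ℝ) - (i : ℝ)) / ((n : ℝ) * b)) -
            ∫ z in (((t : ℝ) / (n : ℝ) - 1) / b)..(((t : ℝ) / (n : ℝ)) / b),
              |z| ^ k * K z| ≤ C / ((n : ℝ) * bseq n) := by
  obtain ⟨-, hK0, -, hKint, hKmono, hKanti, -, -, -⟩ := hK
  have hKi : Integrable K := .of_integral_ne_zero (by simp [hKint])
  set f : ℝ → ℝ := fun z => |z| ^ k * K z
  set V := 2 * (K 0 + 2 * ∫ z, K z)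
  have hV : 0 < V := by simp only [V, hKint]; linarith [hK0 0]
  have hvar : eVariationOn f univ ≤ .ofReal V :=
    eVariationOn_abs_pow_mul_le_of_unimodal hK0 hKmono hKanti hKi (by omega)
  have hfloc : LocallyIntegrable f := hKi.locallyIntegrable.continuous_mul (by fun_prop)
  refine ⟨V / cmin, by positivity, fun n hn b hb t ht => ?_⟩
  have hn0 : (0 : ℝ) < n := by exact_mod_cast hn
  have hcb : 0 < cmin * bseq n := mul_pos hcmin (hbpos n)
  have hnb : 0 < (n : ℝ) * b := mul_pos hn0 (hcb.trans_le hb.1)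
  have hlo : ((t : ℝ) / n - 1) / b = (t - n) / (n * b) := by field_simp
  have hhi : ((t : ℝ) / n) / b = (t - n) / (n * b) + n * (1 / (n * b)) := by field_simp; ring
  rw [sum_Icc_one_comp_div_eq_sum_range (fun z => |z| ^ k * K z), hlo, hhi]
  set I := Icc ((t - n) / (n * b)) ((t - n) / (n * b) + n * (1 / ((n : ℝ) * b)))
  have hvarI : eVariationOn f I ≤ .ofReal V := (eVariationOn.mono f (subset_univ I)).trans hvar
  calc _ ≤ 1 / (n * b) * (eVariationOn f I).toReal :=
        abs_riemannSum_sub_integral_le_eVariationOn hfloc (by positivity) n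
          (ne_top_of_le_ne_top ENNReal.ofReal_ne_top hvarI)
    _ ≤ 1 / (n * b) * V := by gcongr; exact ENNReal.toReal_le_of_le_ofReal hV.le hvarI
    _ = V / (n * b) := by ring
    _ ≤ V / (n * (cmin * bseq n)) := by gcongr; exact hb.1
    _ = V / cmin / (n * bseq n) := by field_simp

/-- Lemma 2(a): uniform approximation of the kernel Riemann sums. -/
theorem stmt_12 (K : ℝ → ℝ) (hK : KernelAssumption K)
    (k : ℕ) (hk : k = 0 ∨ k = 1)
    (bseq : ℕ → ℝ) (hbpos : ∀ n, 0 < bseq n)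
    (hb0 : Tendsto bseq atTop (𝓝 0))
    (hnb : Tendsto (fun n : ℕ => (n : ℝ) * bseq n) atTop atTop)
    (cmin cmax : ℝ) (hcmin : 0 < cmin) (hcc : cmin < cmax) :
    ∃ C : ℝ, 0 < C ∧ ∀ n : ℕ, 1 ≤ n →
      ∀ b ∈ Set.Icc (cmin * bseq n) (cmax * bseq n), ∀ t ∈ Finset.Icc 1 n,
        |(1 / ((n : ℝ) * b)) * ∑ i ∈ Finset.Icc 1 n,
              |((t : ℝ) - (i : ℝ)) / ((n : ℝ) * b)| ^ k *
                K (((t : ℝ) - (i : ℝ)) / ((n : ℝ) * b)) -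
            ∫ z in (((t : ℝ) / (n : ℝ) - 1) / b)..(((t : ℝ) / (n : ℝ)) / b),
              |z| ^ k * K z| ≤ C / ((n : ℝ) * bseq n) :=
  stmt_12_general K hK k hk bseq hbpos cmin cmax hcmin
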